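/- arXiv:1505.06503 — 2 statements merged into one kernel-verified Lean document; each statement's English description precedes it below -/
import Mathlib

section
/- The Jucys–Murphy element J_k = (1 k) + (2 k) + ... + (k-1 k) in the group algebra ℂ[S_n] has the property that any symmetric polynomial evaluated at J_2,...,J_n lies in the center of ℂ[S_n]. -/
/-!
The adjacent transpositions `s_c = (c c+1)` generate `S_n`, and the elementary symmetric
polynomials generate the symmetric ones, so it suffices that each `s_c` commutes with every
`e_k(J_2, …, J_n)`. Now `s_c` commutes with `J_m` for `m ≠ c, c+1`, while
`s_c J_c = J_{c+1} s_c - 1` and `s_c J_{c+1} = J_c s_c + 1`; hence `s_c` commutes with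
`J_c + J_{c+1}` and `J_c J_{c+1}`, and `e_k(J_2, …, J_n)` is a polynomial in these two and the
remaining `J_m`. For `c = 1` the transposition `s_1 = J_2` itself lies in the commutative
algebra generated by the `J_m`.
-/

open Equiv Finset

/-- The Jucys–Murphy element `J_k = (1 k) + (2 k) + ⋯ + (k-1 k)` in `ℂ[S_n]`. -/
noncomputable def jucysMurphy (n : ℕ) (k : Fin n) :
    MonoidAlgebra ℂ (Equiv.Perm (Fin n)) :=
  ∑ i ∈ Finset.univ.filter (fun i : Fin n => i < k),
    MonoidAlgebra.of ℂ (Equiv.Perm (Fin n)) (Equiv.swap i k)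

/-- Evaluation of a multivariate polynomial at the Jucys–Murphy elements
`J_2, …, J_n` (which pairwise commute, so the ordered products below are
unambiguous). -/
noncomputable def evalAtJucysMurphy (n : ℕ) (p : MvPolynomial (Fin (n - 1)) ℂ) :
    MonoidAlgebra ℂ (Equiv.Perm (Fin n)) :=
  ∑ m ∈ p.support,
    p.coeff m •
      (List.ofFn fun i : Fin (n - 1) =>
        jucysMurphy n ⟨i.1 + 1, by have := i.isLt; omega⟩ ^ m i).prod

namespace MonoidAlgebra

theorem mem_center_of_forall_commute_of_mclosure_eq_top {R M : Type*} [CommSemiring R]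
    [Monoid M] {s : Set M} (hs : Submonoid.closure s = ⊤) {x : MonoidAlgebra R M}
    (hx : ∀ g ∈ s, Commute (of R M g) x) : x ∈ Subalgebra.center R (MonoidAlgebra R M) := by
  have hof (g : M) : Commute (of R M g) x := by
    induction (hs ▸ Submonoid.mem_top g : g ∈ Submonoid.closure s)
      using Submonoid.closure_induction with
    | mem g hg => exact hx g hg
    | one => rw [map_one]; exact Commute.one_left x
    | mul g h _ _ hg hh => rw [map_mul]; exact hg.mul_left hh
  refine Subalgebra.mem_center_iff.2 fun b => Commute.eq (Commute.symm ?_)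
  refine Algebra.commute_of_mem_adjoin_of_forall_mem_commute (mem_adjoin_support b) ?_
  rintro _ ⟨g, -, rfl⟩
  exact (hof g).symm

variable {R α : Type*} [Semiring R] [DecidableEq α]

theorem of_mul_of_swap (σ : Perm α) (i k : α) :
    of R (Perm α) σ * of R (Perm α) (swap i k) =
      of R (Perm α) (swap (σ i) (σ k)) * of R (Perm α) σ := by
  rw [← map_mul, ← map_mul, swap_apply_apply, inv_mul_cancel_right]

theorem of_mul_sum_of_swap (σ : Perm α) (s : Finset α) (k : α) :
    of R (Perm α) σ * ∑ i ∈ s, of R (Perm α) (swap i k) =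
      (∑ i ∈ s.map σ.toEmbedding, of R (Perm α) (swap i (σ k))) * of R (Perm α) σ := by
  simp only [mul_sum, sum_map, sum_mul, of_mul_of_swap, Equiv.coe_toEmbedding]

end MonoidAlgebra

theorem Equiv.Perm.mclosure_swap_of_val_eq_succ (n : ℕ) :
    Submonoid.closure {σ : Perm (Fin n) | ∃ c c' : Fin n, (c' : ℕ) = c + 1 ∧ swap c c' = σ} =
      ⊤ := by
  cases n with
  | zero => exact eq_top_iff.2 fun g _ => Subsingleton.elim g 1 ▸ one_mem _
  | succ m =>
    refine top_unique ((mclosure_swap_castSucc_succ m).ge.trans (Submonoid.closure_mono ?_))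
    rintro _ ⟨i, rfl⟩
    exact ⟨_, _, by simp, rfl⟩

namespace Multiset

variable {R : Type*} [CommSemiring R]

@[simp]
theorem esymm_zero (s : Multiset R) : s.esymm 0 = 1 := by
  simp [esymm]

theorem esymm_cons_succ (a : R) (s : Multiset R) (k : ℕ) :
    (a ::ₘ s).esymm (k + 1) = s.esymm (k + 1) + a * s.esymm k := by
  simp [esymm, map_map, sum_map_mul_left]

theorem esymm_mem {S : Subsemiring R} {s : Multiset R} (hs : ∀ a ∈ s, a ∈ S) (k : ℕ) :
    s.esymm k ∈ S := by
  refine S.multiset_sum_mem _ fun t ht => ?_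
  obtain ⟨u, hu, rfl⟩ := mem_map.1 ht
  exact S.multiset_prod_mem _ fun a ha => hs a (mem_of_le (mem_powersetCard.1 hu).1 ha)

theorem esymm_cons_cons_mem {S : Subsemiring R} {a b : R} {s : Multiset R}
    (hs : ∀ x ∈ s, x ∈ S) (hadd : a + b ∈ S) (hmul : a * b ∈ S) :
    ∀ k, (a ::ₘ b ::ₘ s).esymm k ∈ S
  | 0 => by simp
  | 1 => by
    rw [esymm_cons_succ, esymm_cons_succ]
    simpa [add_assoc, add_comm b a] using S.add_mem (esymm_mem hs 1) hadd
  | k + 2 => by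
    have h : (a ::ₘ b ::ₘ s).esymm (k + 2) =
        s.esymm (k + 2) + (a + b) * s.esymm (k + 1) + a * b * s.esymm k := by
      rw [esymm_cons_succ, esymm_cons_succ, esymm_cons_succ]
      ring
    rw [h]
    exact S.add_mem (S.add_mem (esymm_mem hs _) (S.mul_mem hadd (esymm_mem hs _)))
      (S.mul_mem hmul (esymm_mem hs _))

end Multiset

theorem MvPolynomial.aeval_esymm_mem_of_pair {σ R A : Type*} [CommSemiring R] [CommSemiring A]
    [Algebra R A] [Fintype σ] (S : Subsemiring A) (x : σ → A) {a b : σ} (hab : a ≠ b)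
    (hx : ∀ i, i ≠ a → i ≠ b → x i ∈ S) (hadd : x a + x b ∈ S) (hmul : x a * x b ∈ S)
    (k : ℕ) : aeval x (esymm σ R k) ∈ S := by
  classical
  have huniv : (univ : Finset σ).val = a ::ₘ b ::ₘ ((univ.val.erase a).erase b) := by
    rw [Multiset.cons_erase (Multiset.mem_erase_of_ne hab.symm |>.2 (mem_univ b)),
      Multiset.cons_erase (mem_univ a)]
  rw [aeval_esymm_eq_multiset_esymm, huniv, Multiset.map_cons, Multiset.map_cons]
  refine Multiset.esymm_cons_cons_mem (fun y hy => ?_) hadd hmul k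
  obtain ⟨i, hi, rfl⟩ := Multiset.mem_map.1 hy
  rw [← Finset.erase_val, ← Finset.erase_val, Finset.mem_val, mem_erase, mem_erase] at hi
  exact hx i hi.2.1 hi.1

theorem MvPolynomial.IsSymmetric.mem_of_forall_esymm_mem {σ R : Type*} [CommRing R]
    [Fintype σ] {S : Subalgebra R (MvPolynomial σ R)} (hS : ∀ k, esymm σ R k ∈ S)
    {p : MvPolynomial σ R} (hp : p.IsSymmetric) : p ∈ S := by
  obtain ⟨q, hq⟩ := esymmAlgHom_surjective R le_rfl ⟨p, hp⟩
  have hpq : p = aeval (fun i : Fin (Fintype.card σ) => esymm σ R (i + 1)) q := by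
    rw [← esymmAlgHom_apply, hq]
  have : aeval (fun i : Fin (Fintype.card σ) => esymm σ R (i + 1)) q ∈
      Algebra.adjoin R (Set.range fun i : Fin (Fintype.card σ) => esymm σ R (i + 1)) := by
    rw [← aeval_range]
    exact ⟨q, rfl⟩
  exact hpq ▸ Algebra.adjoin_le (Set.range_subset_iff.2 fun i => hS _) this

open MonoidAlgebra

section JucysMurphy

variable {n : ℕ}

theorem commute_of_jucysMurphy {σ : Perm (Fin n)} {k : Fin n} (hk : σ k = k)
    (hσ : ∀ i < k, σ i < k) : Commute (of ℂ _ σ) (jucysMurphy n k) := by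
  have hmap : (univ.filter fun i : Fin n => i < k).map σ.toEmbedding =
      univ.filter fun i : Fin n => i < k :=
    map_eq_of_subset fun j hj => by
      obtain ⟨i, hi, rfl⟩ := mem_map.1 hj
      simpa using hσ i (by simpa using hi)
  rw [Commute, SemiconjBy, jucysMurphy, of_mul_sum_of_swap, hk, hmap]

theorem commute_of_swap_jucysMurphy {i j k : Fin n} (hik : i ≠ k) (hjk : j ≠ k)
    (hij : i < k ↔ j < k) : Commute (of ℂ _ (swap i j)) (jucysMurphy n k) := by
  refine commute_of_jucysMurphy (swap_apply_of_ne_of_ne hik.symm hjk.symm) fun m hm => ?_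
  rw [swap_apply_def]
  split_ifs with hmi hmj
  · exact hij.1 (hmi ▸ hm)
  · exact hij.2 (hmj ▸ hm)
  · exact hm

theorem jucysMurphy_commute (k l : Fin n) : Commute (jucysMurphy n k) (jucysMurphy n l) := by
  wlog hkl : k < l generalizing k l
  · rcases (not_lt.1 hkl).eq_or_lt with rfl | hlk
    · exact Commute.refl _
    · exact (this l k hlk).symm
  refine Commute.sum_left _ _ _ fun i hi => ?_
  have hil : i < l := (mem_filter.1 hi).2.trans hkl
  exact commute_of_swap_jucysMurphy hil.ne hkl.ne (iff_of_true hil hkl)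

section Adjacent

variable {c c' : Fin n}

theorem jucysMurphy_eq_of_val_eq_succ (hc : (c' : ℕ) = c + 1) :
    jucysMurphy n c' =
      of ℂ _ (swap c c') + ∑ i ∈ univ.filter (fun i : Fin n => i < c), of ℂ _ (swap i c') := by
  have : univ.filter (fun i : Fin n => i < c') = insert c (univ.filter fun i : Fin n => i < c) := by
    ext i
    simp only [mem_filter, mem_univ, true_and, mem_insert, Fin.lt_def, Fin.ext_iff]
    omega
  rw [jucysMurphy, this, sum_insert (by simp)]

theorem of_swap_mul_jucysMurphy (hc : (c' : ℕ) = c + 1) :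
    of ℂ _ (swap c c') * jucysMurphy n c = jucysMurphy n c' * of ℂ _ (swap c c') - 1 := by
  rw [jucysMurphy_eq_of_val_eq_succ hc, add_mul, ← map_mul, swap_mul_self, map_one,
    add_sub_cancel_left, jucysMurphy, mul_sum, sum_mul]
  refine sum_congr rfl fun i hi => ?_
  have hic : (i : ℕ) < c := (mem_filter.1 hi).2
  rw [of_mul_of_swap, swap_apply_left,
    swap_apply_of_ne_of_ne (Fin.ne_of_val_ne hic.ne) (Fin.ne_of_val_ne (by omega))]

theorem of_swap_mul_jucysMurphy_succ (hc : (c' : ℕ) = c + 1) :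
    of ℂ _ (swap c c') * jucysMurphy n c' = jucysMurphy n c * of ℂ _ (swap c c') + 1 := by
  set s := of ℂ _ (swap c c')
  have hs : s * s = 1 := by rw [← map_mul, swap_mul_self, map_one]
  have h : jucysMurphy n c' * s = s * jucysMurphy n c + 1 :=
    (sub_eq_iff_eq_add.1 (of_swap_mul_jucysMurphy hc).symm)
  calc s * jucysMurphy n c' = s * (jucysMurphy n c' * s) * s := by
        rw [mul_assoc, mul_assoc, hs, mul_one]
    _ = jucysMurphy n c * s + 1 := by
        rw [h, mul_add, mul_one, ← mul_assoc, hs, one_mul, add_mul, hs]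

theorem commute_of_swap_jucysMurphy_add (hc : (c' : ℕ) = c + 1) :
    Commute (of ℂ _ (swap c c')) (jucysMurphy n c + jucysMurphy n c') := by
  rw [Commute, SemiconjBy, mul_add, of_swap_mul_jucysMurphy hc, of_swap_mul_jucysMurphy_succ hc,
    add_mul]
  abel

theorem commute_of_swap_jucysMurphy_mul (hc : (c' : ℕ) = c + 1) :
    Commute (of ℂ _ (swap c c')) (jucysMurphy n c * jucysMurphy n c') := by
  set s := of ℂ _ (swap c c')
  calc s * (jucysMurphy n c * jucysMurphy n c')
      = (jucysMurphy n c' * s - 1) * jucysMurphy n c' := by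
        rw [← mul_assoc, of_swap_mul_jucysMurphy hc]
    _ = jucysMurphy n c' * (jucysMurphy n c * s + 1) - jucysMurphy n c' := by
        rw [sub_mul, one_mul, mul_assoc, of_swap_mul_jucysMurphy_succ hc]
    _ = jucysMurphy n c * jucysMurphy n c' * s := by
        rw [mul_add, mul_one, add_sub_cancel_right, ← mul_assoc, (jucysMurphy_commute c' c).eq]

end Adjacent

end JucysMurphy

noncomputable def jucysMurphySubalgebra (n : ℕ) : Subalgebra ℂ (MonoidAlgebra ℂ (Perm (Fin n))) :=
  Algebra.adjoin ℂ (Set.range (jucysMurphy n))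

instance (n : ℕ) : IsMulCommutative (jucysMurphySubalgebra n) :=
  Algebra.isMulCommutative_adjoin ℂ <| by
    rintro _ ⟨k, rfl⟩ _ ⟨l, rfl⟩
    exact (jucysMurphy_commute k l).eq

open scoped IsMulCommutative

/-- `jucysMurphyFamily n i` is `J_{i+2}` in the paper's one-based numbering. -/
noncomputable def jucysMurphyFamily (n : ℕ) (i : Fin (n - 1)) : jucysMurphySubalgebra n :=
  ⟨jucysMurphy n ⟨i + 1, by omega⟩, Algebra.subset_adjoin ⟨_, rfl⟩⟩

theorem evalAtJucysMurphy_eq_aeval (n : ℕ) (p : MvPolynomial (Fin (n - 1)) ℂ) :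
    evalAtJucysMurphy n p = (MvPolynomial.aeval (jucysMurphyFamily n) p : _) := by
  rw [MvPolynomial.aeval_def, MvPolynomial.eval₂_eq', evalAtJucysMurphy]
  push_cast
  refine sum_congr rfl fun m _ => ?_
  rw [Algebra.algebraMap_eq_smul_one, smul_mul_assoc, one_mul, ← List.prod_ofFn, SubmonoidClass.coe_list_prod, List.map_ofFn]
  rfl

theorem aeval_esymm_jucysMurphyFamily_mem_center (n k : ℕ) :
    (MvPolynomial.aeval (jucysMurphyFamily n) (MvPolynomial.esymm (Fin (n - 1)) ℂ k) :
      MonoidAlgebra ℂ (Perm (Fin n))) ∈ Subalgebra.center ℂ _ := by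
  refine mem_center_of_forall_commute_of_mclosure_eq_top (Perm.mclosure_swap_of_val_eq_succ n) ?_
  rintro _ ⟨c, c', hc, rfl⟩
  set T := jucysMurphySubalgebra n
  set D : Subsemiring T := (Subsemiring.centralizer {of ℂ _ (swap c c')}).comap (T.val : T →+* _)
  have hD (t : T) : t ∈ D ↔ Commute (of ℂ _ (swap c c')) t := by
    simp [D, Subsemiring.mem_centralizer_iff, Commute, SemiconjBy]
  rw [← hD]
  have hc' := c'.2
  rcases Nat.eq_zero_or_pos c with hc0 | hc0
  · -- there is no variable `J_c` here, but `(c c') = J_{c'}` lies in the commutative algebra `T`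
    have hs : of ℂ _ (swap c c') = jucysMurphy n c' := by
      rw [jucysMurphy_eq_of_val_eq_succ hc, left_eq_add]
      exact sum_eq_zero fun i hi => absurd (mem_filter.1 hi).2 (by simp [Fin.lt_def, hc0])
    rw [hD, hs]
    exact congrArg Subtype.val (mul_comm (⟨_, Algebra.subset_adjoin ⟨c', rfl⟩⟩ : T) _)
  · have ha : (jucysMurphyFamily n ⟨c - 1, by omega⟩ : MonoidAlgebra ℂ (Perm (Fin n))) =
        jucysMurphy n c := congrArg (jucysMurphy n) (Fin.ext (by simp; omega))
    have hb : (jucysMurphyFamily n ⟨c, by omega⟩ : MonoidAlgebra ℂ (Perm (Fin n))) =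
        jucysMurphy n c' := congrArg (jucysMurphy n) (Fin.ext hc.symm)
    refine MvPolynomial.aeval_esymm_mem_of_pair D _ (a := ⟨c - 1, by omega⟩) (b := ⟨c, by omega⟩)
      (by simp [Fin.ext_iff]; omega) ?_ ?_ ?_ k
    · intro i hia hib
      rw [hD]
      refine commute_of_swap_jucysMurphy ?_ ?_ ?_ <;>
        simp only [ne_eq, Fin.ext_iff, Fin.lt_def] at hia hib ⊢ <;> omega
    · rw [hD, Subalgebra.coe_add, ha, hb]
      exact commute_of_swap_jucysMurphy_add hc
    · rw [hD, Subalgebra.coe_mul, ha, hb]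
      exact commute_of_swap_jucysMurphy_mul hc

/-- Any symmetric polynomial evaluated at the Jucys–Murphy elements `J_2, …, J_n`
lies in the center of the group algebra `ℂ[S_n]`. -/
theorem symmetric_jucysMurphy_mem_center (n : ℕ)
    (p : MvPolynomial (Fin (n - 1)) ℂ) (hp : p.IsSymmetric) :
    evalAtJucysMurphy n p ∈
      Subalgebra.center ℂ (MonoidAlgebra ℂ (Equiv.Perm (Fin n))) := by
  rw [evalAtJucysMurphy_eq_aeval]
  exact hp.mem_of_forall_esymm_mem (S := (Subalgebra.center ℂ _).comap
    ((jucysMurphySubalgebra n).val.comp (MvPolynomial.aeval (jucysMurphyFamily n))))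
    (aeval_esymm_jucysMurphyFamily_mem_center n)
end

section
/- For a = 1, the wavefunction Z(x,ℏ) = 1 + ∑_{k≥1} x^k/(k! ℏ^k) ∏_{j=1}^{k-1} 1/(1-jℏ) satisfies (x·ŷ² + ŷ + 1)Z = 0 where ŷ = -ℏ ∂/∂x, recovering the quantum curve for monotone Hurwitz numbers. -/
open PowerSeries

/-- The formal variable `ℏ`, as a Laurent series over `ℚ`. -/
noncomputable def hbar : LaurentSeries ℚ := HahnSeries.single 1 1

/-- The `a = 1` wave function `Z(x,ℏ) = 1 + ∑_{k≥1} x^k/(k! ℏ^k) ∏_{j=1}^{k-1} 1/(1-jℏ)`. -/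
noncomputable def waveFunctionOne : PowerSeries (LaurentSeries ℚ) :=
  PowerSeries.mk fun n =>
    if n = 0 then 1
    else
      ((n.factorial : LaurentSeries ℚ) * hbar ^ n)⁻¹ *
        ∏ j ∈ Finset.range (n - 1), (1 - ((j : LaurentSeries ℚ) + 1) * hbar)⁻¹

/-- The operator `ŷ = -ℏ ∂/∂x` acting on `ℚ((ℏ))[[x]]`. -/
noncomputable def yhat (f : PowerSeries (LaurentSeries ℚ)) : PowerSeries (LaurentSeries ℚ) :=
  -(PowerSeries.C hbar) * f.derivativeFun

/-!
Writing `z n` for the coefficients of `Z`, the closed form gives the first-order recursion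
`z n = (n + 1) ℏ (1 - n ℏ) z (n + 1)`, while the coefficient of `xⁿ` in `(x ŷ² + ŷ + 1) Z` is
`ℏ² n (n + 1) z (n + 1) - ℏ (n + 1) z (n + 1) + z n`, which is the same recursion.
-/

instance : CharZero (LaurentSeries ℚ) :=
  charZero_of_injective_algebraMap (algebraMap ℚ _).injective

lemma hbar_ne_zero : hbar ≠ 0 := HahnSeries.single_ne_zero one_ne_zero

lemma one_sub_natCast_mul_hbar_ne_zero (n : ℕ) : 1 - (n : LaurentSeries ℚ) * hbar ≠ 0 := by
  intro h
  have := congrArg (HahnSeries.coeff · 0) h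
  simp [hbar, ← nsmul_eq_mul] at this

lemma coeff_yhat (f : PowerSeries (LaurentSeries ℚ)) (n : ℕ) :
    coeff n (yhat f) = -hbar * (n + 1) * coeff (n + 1) f := by
  change coeff n (-C hbar * d⁄dX _ f) = _
  rw [neg_mul, map_neg, coeff_C_mul, coeff_derivative]
  ring

lemma coeff_waveFunctionOne_eq_mul_coeff_succ (n : ℕ) :
    coeff n waveFunctionOne =
      (n + 1) * hbar * (1 - n * hbar) * coeff (n + 1) waveFunctionOne := by
  have hh := hbar_ne_zero
  rcases n with _ | m
  · simp [waveFunctionOne, hh]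
  · have hm : ((m + 1 : ℕ) : LaurentSeries ℚ) + 1 ≠ 0 := Nat.cast_add_one_ne_zero _
    have hA := one_sub_natCast_mul_hbar_ne_zero (m + 1)
    simp only [waveFunctionOne, coeff_mk, Nat.succ_ne_zero, if_false, Nat.add_sub_cancel,
      Finset.prod_range_succ, Nat.factorial_succ, pow_succ]
    push_cast at hm hA ⊢
    field_simp

/-- The quantum curve for monotone Hurwitz numbers: `(x·ŷ² + ŷ + 1) Z = 0`. -/
theorem quantum_curve_monotone :
    PowerSeries.X * yhat (yhat waveFunctionOne) + yhat waveFunctionOne +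
      waveFunctionOne = 0 := by
  refine PowerSeries.ext fun n => ?_
  have hrec := coeff_waveFunctionOne_eq_mul_coeff_succ n
  rcases n with _ | m
  · simp only [map_add, coeff_zero_X_mul, coeff_yhat, map_zero] at hrec ⊢
    linear_combination hrec
  · simp only [map_add, coeff_succ_X_mul, coeff_yhat, map_zero] at hrec ⊢
    push_cast at hrec ⊢
    linear_combination hrec
end
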